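/- Let L be a first-order language extending the language of rings whose only function symbols are those of the language of rings, and let K be a field carrying a non-trivial valuation, which is an L-structure admitting quantifier elimination and equipped with the topological system in which each K^n carries the product of the valuation topology on K (and this satisfies the topological system axioms: term maps are continuous, singletons are closed, and the relation sets with nonzero coordinates are open), and such that every nonempty special open subset of K is infinite. For a nonempty L-definable subset S of K^n, let dim S denote the largest integer k ≥ 0 such that the image of S under some coordinate projection K^n → K^k has nonempty interior in K^k. Then for every L-definable subset E of K^n with nonempty frontier ∂E = cl(E) \ E, one has dim(∂E) < dim(E). -/

import Mathlib

/-!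
By quantifier elimination and the openness of the relation sets, every definable set is a finite
union of cells `V(Z) ∩ U`, where `V(Z)` is the common zero set of finitely many polynomials and
`U` is open and relatively clopen in the non-vanishing set `{g ≠ 0}` of a polynomial `g`, so that
the frontier of a cell lies in `{g = 0}`. A nonempty frontier forces `K` to be non-discrete, so a
polynomial vanishing on a nonempty open set is zero; hence a coordinate projection of a definable
set has interior exactly when no nonzero polynomial in those coordinates vanishes on it, and the
dimension is the transcendence degree of the coordinate functions.

The strict inequality is then the fact that cutting by a non-zero-divisor `g` lowers this degree.
If coordinates `x_s` are independent modulo `g`, choose primes `Q ≤ P` of the coordinate ring with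
`g ∈ P \ Q` and `P` meeting `K[x_s]` only in `0`. Were every coordinate algebraic over `K[x_s]`
modulo `Q`, so would be the nonzero element `g` of `P / Q`, which would force a nonzero element of
`K[x_s]` into `P`.
-/

open FirstOrder

/-- A *basic special open* subset of `K^n`: either the nonzero set of an `L(K)`-term, or
the set where the relation symbol `R` holds (respectively fails) at the point whose
`i_j`-th coordinate is `t_{i_j}(a)` and whose other coordinates are `0`, with all
`t_{i_j}(a) ≠ 0`.  Here `L = ring ⊕ Lrel` and parameters from `K` are represented by
extra variables evaluated via `id`. -/
def IsBasicSpecialOpen (Lrel : FirstOrder.Language) (K : Type*) [CommRing K]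
    [FirstOrder.Ring.CompatibleRing K] [Lrel.Structure K] {n : ℕ}
    (S : Set (Fin n → K)) : Prop :=
  (∃ t : (FirstOrder.Language.ring.sum Lrel).Term (Fin n ⊕ K),
      S = {a : Fin n → K | t.realize (Sum.elim a id) ≠ 0}) ∨
  (∃ (m k : ℕ) (R : Lrel.Relations m) (j : Fin k → Fin m), StrictMono j ∧
    ∃ t : Fin k → (FirstOrder.Language.ring.sum Lrel).Term (Fin n ⊕ K),
      S = {a : Fin n → K | (∀ l, (t l).realize (Sum.elim a id) ≠ 0) ∧
            FirstOrder.Language.Structure.RelMap R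
              (Function.extend j (fun l => (t l).realize (Sum.elim a id)) 0)} ∨
      S = {a : Fin n → K | (∀ l, (t l).realize (Sum.elim a id) ≠ 0) ∧
            ¬ FirstOrder.Language.Structure.RelMap R
              (Function.extend j (fun l => (t l).realize (Sum.elim a id)) 0)})

/-- A *special open* subset of `K^n`: a finite intersection of basic special open sets. -/
def IsSpecialOpen (Lrel : FirstOrder.Language) (K : Type*) [CommRing K]
    [FirstOrder.Ring.CompatibleRing K] [Lrel.Structure K] {n : ℕ}
    (S : Set (Fin n → K)) : Prop :=
  ∃ (s : ℕ) (U : Fin s → Set (Fin n → K)),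
    (∀ i, IsBasicSpecialOpen Lrel K (U i)) ∧ S = ⋂ i, U i

/-- The dimension of a subset `S ⊆ K^n`: the largest `k ≥ 0` such that the image of `S`
under some coordinate projection `K^n → K^k` has nonempty interior in `K^k` (each `K^m`
carrying the product topology). -/
noncomputable def projDim {K : Type*} [TopologicalSpace K] {n : ℕ}
    (S : Set (Fin n → K)) : ℕ :=
  sSup {k : ℕ | ∃ j : Fin k → Fin n, StrictMono j ∧
    (interior ((fun x : Fin n → K => x ∘ j) '' S)).Nonempty}

open Set MvPolynomial Filter Topology Function Language Structure

section Transcendence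

variable {ι K A : Type*} [Field K] [CommRing A] [Algebra K A]

theorem exists_algebraicIndepOn_insert_of_isDomain [IsDomain A] {x : ι → A}
    (hx : Algebra.adjoin K (range x) = ⊤) {s : Set ι} (hs : AlgebraicIndepOn K x s)
    {P : Ideal A} (hP : ∀ a ∈ Algebra.adjoin K (x '' s), a ∈ P → a = 0) {p : A} (hp0 : p ≠ 0)
    (hpP : p ∈ P) : ∃ i ∉ s, AlgebraicIndepOn K x (insert i s) := by
  by_contra! h
  have halg : ∀ y ∈ range x \ x '' s, IsAlgebraic (Algebra.adjoin K (x '' s)) y := by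
    rintro _ ⟨⟨i, rfl⟩, hi⟩
    have hi : i ∉ s := fun his => hi ⟨i, his, rfl⟩
    simpa [hs, Transcendental] using mt (AlgebraicIndepOn.insert_iff hi).2 (h i hi)
  have hp : IsAlgebraic (Algebra.adjoin K (x '' s)) p :=
    IsAlgebraic.adjoin_of_forall_isAlgebraic halg
      (isAlgebraic_algebraMap (⟨p, hx ▸ trivial⟩ : Algebra.adjoin K (range x)))
  obtain ⟨⟨a, ha⟩, haP, ha0⟩ := Submodule.exists_mem_ne_zero_of_ne_bot
    (Ideal.comap_ne_bot_of_algebraic_mem hp0 hpP hp)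
  exact ha0 (Subtype.ext (hP a ha haP))

theorem Ideal.exists_isPrime_le_of_mem_nonZeroDivisors {I : Ideal A} {M : Submonoid A}
    (hIM : Disjoint (I : Set A) M) {p : A} (hp : p ∈ nonZeroDivisors A) :
    ∃ P Q : Ideal A, P.IsPrime ∧ Q.IsPrime ∧ I ≤ P ∧ Disjoint (P : Set A) M ∧ Q ≤ P ∧ p ∉ Q := by
  obtain ⟨P, hP, hIP, hPM⟩ := Ideal.exists_le_prime_disjoint I M hIM
  obtain ⟨Q, hQ, -, hQT⟩ := Ideal.exists_le_prime_disjoint ⊥ (P.primeCompl ⊔ .powers p) <| by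
    refine Set.disjoint_left.2 fun a ha haT => ?_
    obtain ⟨b, hb, _, ⟨m, rfl⟩, rfl⟩ := Submonoid.mem_sup.1 haT
    exact hb (mem_nonZeroDivisors_iff_right.1 (pow_mem hp m) b ha ▸ P.zero_mem)
  refine ⟨P, Q, hP, hQ, hIP, hPM, fun a haQ => ?_, fun hpQ => ?_⟩
  · by_contra haP
    exact Set.disjoint_left.1 hQT haQ (Submonoid.mem_sup_left haP)
  · exact Set.disjoint_left.1 hQT hpQ (Submonoid.mem_sup_right (Submonoid.mem_powers p))

theorem exists_algebraicIndepOn_insert_of_mem_nonZeroDivisors {B : Type*} [CommRing B]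
    [Algebra K B] {x : ι → A} (hx : Algebra.adjoin K (range x) = ⊤) {p : A}
    (hp : p ∈ nonZeroDivisors A)
    (f : A →ₐ[K] B) (hfp : f p = 0) {s : Set ι} (hs : AlgebraicIndepOn K (f ∘ x) s) :
    ∃ i ∉ s, AlgebraicIndepOn K x (insert i s) := by
  let xs : s → A := fun i => x i
  obtain ⟨P, Q, -, _, hkerP, hPM, hQP, hpQ⟩ := Ideal.exists_isPrime_le_of_mem_nonZeroDivisors
    (M := (nonZeroDivisors (MvPolynomial s K)).map (aeval xs)) (I := RingHom.ker f)
    (Set.disjoint_left.2 fun a ha ⟨q, hq, hqa⟩ => nonZeroDivisors.ne_zero hq <|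
      (injective_iff_map_eq_zero _).1 hs q <| by
        have ha : f (aeval xs q) = 0 := hqa ▸ ha
        rwa [← AlgHom.comp_apply, comp_aeval] at ha) hp
  have hPs (q : MvPolynomial s K) (hq : aeval xs q ∈ P) : q = 0 := by
    by_contra hq0
    exact Set.disjoint_left.1 hPM hq ⟨q, mem_nonZeroDivisors_of_ne_zero hq0, rfl⟩
  let π := Ideal.Quotient.mkₐ K Q
  have hπ (q : MvPolynomial s K) : aeval (fun i : s => π (x i)) q = π (aeval xs q) :=
    (comp_aeval_apply ..).symm
  have hπx : Algebra.adjoin K (range (π ∘ x)) = ⊤ := by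
    rw [range_comp, Algebra.adjoin_image, hx, Algebra.map_top, AlgHom.range_eq_top]
    exact Ideal.Quotient.mkₐ_surjective K Q
  have hπs : AlgebraicIndepOn K (π ∘ x) s := by
    refine (injective_iff_map_eq_zero _).2 fun q hq => hPs q (hQP ?_)
    rwa [← Ideal.Quotient.eq_zero_iff_mem, ← Ideal.Quotient.mkₐ_eq_mk K, ← hπ]
  have hπP : ∀ a ∈ Algebra.adjoin K ((π ∘ x) '' s), a ∈ P.map π → a = 0 := by
    rw [image_eq_range, Algebra.adjoin_range_eq_range_aeval]
    rintro _ ⟨q, rfl⟩ hq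
    simp only [AlgHom.toRingHom_eq_coe, RingHom.coe_coe, comp_apply, hπ] at hq ⊢
    rw [Ideal.Quotient.mkₐ_eq_mk] at hq
    rw [hPs q ((Ideal.mem_quotient_iff_mem hQP).1 hq), map_zero, map_zero]
  obtain ⟨i, hi, hind⟩ := exists_algebraicIndepOn_insert_of_isDomain hπx hπs hπP
    (fun h => hpQ (Ideal.Quotient.eq_zero_iff_mem.1 h)) (Ideal.mem_map_of_mem _ (hkerP hfp))
  exact ⟨i, hi, hind.of_comp⟩

theorem algebraicIndepOn_range_iff {ι' : Type*} {x : ι → A} {j : ι' → ι} (hj : Injective j) :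
    AlgebraicIndepOn K x (range j) ↔ AlgebraicIndependent K (x ∘ j) :=
  (algebraicIndependent_equiv' (Equiv.ofInjective j hj) rfl).symm

theorem AlgebraicIndepOn.exists_strictMono {n k : ℕ} {x : Fin n → A} {s : Finset (Fin n)}
    (hs : s.card = k) (h : AlgebraicIndepOn K x s) :
    ∃ j : Fin k → Fin n, StrictMono j ∧ AlgebraicIndependent K (x ∘ j) :=
  ⟨s.orderEmbOfFin hs, (s.orderEmbOfFin hs).strictMono,
    (algebraicIndepOn_range_iff (s.orderEmbOfFin hs).injective).1
      (by rwa [Finset.range_orderEmbOfFin])⟩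

end Transcendence

section VanishingIdeal

variable {σ K : Type*} [Field K]

theorem vanishingIdeal_eq_bot_of_subset {S T : Set (σ → K)} (hST : S ⊆ T)
    (h : vanishingIdeal K S = ⊥) : vanishingIdeal K T = ⊥ :=
  eq_bot_iff.2 (h ▸ vanishingIdeal_anti_mono hST)

theorem vanishingIdeal_union_eq_bot {S T : Set (σ → K)} (h : vanishingIdeal K (S ∪ T) = ⊥) :
    vanishingIdeal K S = ⊥ ∨ vanishingIdeal K T = ⊥ := by
  by_contra! hST
  obtain ⟨f, hfS, hf0⟩ := Submodule.exists_mem_ne_zero_of_ne_bot hST.1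
  obtain ⟨g, hgT, hg0⟩ := Submodule.exists_mem_ne_zero_of_ne_bot hST.2
  refine mul_ne_zero hf0 hg0 ((Submodule.eq_bot_iff _).1 h _ ?_)
  rintro a (ha | ha)
  · rw [map_mul, hfS a ha, zero_mul]
  · rw [map_mul, hgT a ha, mul_zero]

theorem Set.Finite.exists_vanishingIdeal_eq_bot {𝒞 : Set (Set (σ → K))} (h𝒞 : 𝒞.Finite)
    (h : vanishingIdeal K (⋃₀ 𝒞) = ⊥) : ∃ c ∈ 𝒞, vanishingIdeal K c = ⊥ := by
  induction 𝒞, h𝒞 using Set.Finite.induction_on with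
  | empty =>
    rw [sUnion_empty, vanishingIdeal_empty] at h
    exact absurd h top_ne_bot
  | @insert c 𝒞 _ _ ih =>
    rw [sUnion_insert] at h
    rcases vanishingIdeal_union_eq_bot h with hc | h𝒞
    · exact ⟨c, mem_insert c 𝒞, hc⟩
    · obtain ⟨d, hd, hd'⟩ := ih h𝒞
      exact ⟨d, mem_insert_of_mem c hd, hd'⟩

noncomputable abbrev coordinate (S : Set (σ → K)) (i : σ) :
    MvPolynomial σ K ⧸ vanishingIdeal K S :=
  Ideal.Quotient.mk _ (X i)

theorem adjoin_range_coordinate (S : Set (σ → K)) :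
    Algebra.adjoin K (range (coordinate S)) = ⊤ := by
  rw [show coordinate S = Ideal.Quotient.mkₐ K _ ∘ X from rfl, range_comp,
    Algebra.adjoin_image, adjoin_range_X, Algebra.map_top, AlgHom.range_eq_top]
  exact Ideal.Quotient.mkₐ_surjective K _

theorem algebraicIndependent_coordinate_comp_iff {ι : Type*} (S : Set (σ → K)) (j : ι → σ) :
    AlgebraicIndependent K (coordinate S ∘ j) ↔ vanishingIdeal K ((· ∘ j) '' S) = ⊥ := by
  rw [algebraicIndependent_iff_injective_aeval, injective_iff_map_eq_zero, Submodule.eq_bot_iff]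
  refine forall_congr' fun q => imp_congr_left ?_
  have : aeval (coordinate S ∘ j) = (Ideal.Quotient.mkₐ K _).comp (rename j) :=
    algHom_ext fun i => by simp
  rw [this, AlgHom.comp_apply, Ideal.Quotient.mkₐ_eq_mk, Ideal.Quotient.eq_zero_iff_mem,
    mem_vanishingIdeal_iff, mem_vanishingIdeal_iff, forall_mem_image]
  simp only [aeval_rename]

variable [TopologicalSpace K]

theorem isClosed_setOf_eval_eq_zero [IsTopologicalRing K] [T1Space K] (f : MvPolynomial σ K) :
    IsClosed {a : σ → K | eval a f = 0} :=
  isClosed_singleton.preimage (continuous_eval f)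

theorem vanishingIdeal_closure [IsTopologicalRing K] [T1Space K] (S : Set (σ → K)) :
    vanishingIdeal K (closure S) = vanishingIdeal K S :=
  le_antisymm (vanishingIdeal_anti_mono subset_closure) fun f hf _ ha =>
    closure_minimal hf (isClosed_setOf_eval_eq_zero f) ha

theorem MvPolynomial.eq_zero_of_eval_eq_zero_of_mem_nhds [T1Space K]
    [∀ x : K, (𝓝[≠] x).NeBot] {f : MvPolynomial σ K} {U : Set (σ → K)} {a : σ → K}
    (hU : U ∈ 𝓝 a) (hf : ∀ b ∈ U, eval b f = 0) : f = 0 := by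
  rw [nhds_pi, mem_pi'] at hU
  obtain ⟨I, t, ht, htU⟩ := hU
  refine funext_set t (fun i => infinite_of_mem_nhds (a i) (ht i)) fun b hb => ?_
  rw [map_zero]
  exact hf b (htU fun i _ => hb i trivial)

theorem vanishingIdeal_eq_bot_of_interior_nonempty [T1Space K] [∀ x : K, (𝓝[≠] x).NeBot]
    {S : Set (σ → K)} (hS : (interior S).Nonempty) : vanishingIdeal K S = ⊥ := by
  obtain ⟨a, ha⟩ := hS
  exact (Submodule.eq_bot_iff _).2 fun f hf =>
    eq_zero_of_eval_eq_zero_of_mem_nhds (mem_interior_iff_mem_nhds.1 ha) hf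

theorem exists_algebraicIndepOn_insert_coordinate [IsTopologicalRing K] [T1Space K] {ι : Type*}
    {S : Set (σ → K)} {g : MvPolynomial σ K} (hgS : ∀ a ∈ S, eval a g ≠ 0)
    (hg : ∀ a ∈ closure S \ S, eval a g = 0) {j : ι → σ}
    (h : AlgebraicIndependent K (coordinate (closure S \ S) ∘ j)) :
    ∃ i ∉ range j, AlgebraicIndepOn K (coordinate S) (insert i (range j)) := by
  have hle : vanishingIdeal K S ≤ vanishingIdeal K (closure S \ S) :=
    vanishingIdeal_closure S ▸ vanishingIdeal_anti_mono sdiff_subset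
  refine exists_algebraicIndepOn_insert_of_mem_nonZeroDivisors (adjoin_range_coordinate S)
    (p := Ideal.Quotient.mk _ g) ?_ (Ideal.Quotient.factorₐ K hle)
    (Ideal.Quotient.eq_zero_iff_mem.2 hg) ?_
  · refine mem_nonZeroDivisors_iff_right.2 fun y hy => ?_
    obtain ⟨f, rfl⟩ := Ideal.Quotient.mk_surjective y
    rw [← map_mul, Ideal.Quotient.eq_zero_iff_mem] at hy
    refine Ideal.Quotient.eq_zero_iff_mem.2 fun a ha => ?_
    simpa [hgS a ha] using hy a ha
  · have : Ideal.Quotient.factorₐ K hle ∘ coordinate S = coordinate (closure S \ S) := rfl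
    rw [this]
    exact (algebraicIndepOn_range_iff h.injective.of_comp).2 h

end VanishingIdeal

theorem neBot_nhdsNE_of_not_discreteTopology {G : Type*} [AddGroup G] [TopologicalSpace G]
    [IsTopologicalAddGroup G] (h : ¬ DiscreteTopology G) (x : G) : (𝓝[≠] x).NeBot := by
  rw [neBot_iff, Ne, ← isOpen_singleton_iff_punctured_nhds]
  refine fun hx => h (discreteTopology_iff_isOpen_singleton_zero.2 ?_)
  simpa using (Homeomorph.addRight (-x)).isOpenMap _ hx

section Cells

variable {σ K : Type*} [Field K] [TopologicalSpace K]

def IsCell (S : Set (σ → K)) : Prop :=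
  ∃ (Z : Set (MvPolynomial σ K)) (g : MvPolynomial σ K) (U : Set (σ → K)), Z.Finite ∧
    IsOpen U ∧ U ⊆ {a | eval a g ≠ 0} ∧ closure U ∩ {a | eval a g ≠ 0} ⊆ U ∧
    S = {a | ∀ f ∈ Z, eval a f = 0} ∩ U

def IsCellUnion (S : Set (σ → K)) : Prop :=
  ∃ 𝒞 : Set (Set (σ → K)), 𝒞.Finite ∧ (∀ c ∈ 𝒞, IsCell c) ∧ S = ⋃₀ 𝒞

theorem isCell_zeroSet {Z : Set (MvPolynomial σ K)} (hZ : Z.Finite) :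
    IsCell {a : σ → K | ∀ f ∈ Z, eval a f = 0} :=
  ⟨Z, 1, univ, hZ, isOpen_univ, fun _ _ => by simp, fun _ _ => trivial, by simp⟩

theorem isCell_of_isOpen {U : Set (σ → K)} (g : MvPolynomial σ K) (hU : IsOpen U)
    (hUg : U ⊆ {a | eval a g ≠ 0}) (hgU : closure U ∩ {a | eval a g ≠ 0} ⊆ U) : IsCell U :=
  ⟨∅, g, U, finite_empty, hU, hUg, hgU, by simp⟩

theorem IsCell.inter {S T : Set (σ → K)} (hS : IsCell S) (hT : IsCell T) : IsCell (S ∩ T) := by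
  obtain ⟨Z, g, U, hZ, hU, hUg, hgU, rfl⟩ := hS
  obtain ⟨Z', g', U', hZ', hU', hUg', hgU', rfl⟩ := hT
  refine ⟨Z ∪ Z', g * g', U ∩ U', hZ.union hZ', hU.inter hU', fun a ha => ?_, ?_, ?_⟩
  · simpa using And.intro (hUg ha.1) (hUg' ha.2)
  · rintro a ⟨ha, hg⟩
    simp only [mem_ofPred_eq, map_mul, mul_ne_zero_iff] at hg
    exact ⟨hgU ⟨closure_mono inter_subset_left ha, hg.1⟩,
      hgU' ⟨closure_mono inter_subset_right ha, hg.2⟩⟩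
  · ext a
    simp only [mem_inter_iff, mem_ofPred_eq, mem_union]
    grind

theorem IsCell.isCellUnion {S : Set (σ → K)} (hS : IsCell S) : IsCellUnion S :=
  ⟨{S}, finite_singleton S, by simpa using hS, by simp⟩

theorem isCellUnion_empty : IsCellUnion (∅ : Set (σ → K)) :=
  ⟨∅, finite_empty, by simp, by simp⟩

theorem isCellUnion_iUnion {ι : Type*} [Finite ι] {S : ι → Set (σ → K)}
    (hS : ∀ i, IsCell (S i)) : IsCellUnion (⋃ i, S i) :=
  ⟨range S, finite_range S, forall_mem_range.2 hS, (sUnion_range S).symm⟩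

theorem IsCellUnion.union {S T : Set (σ → K)} (hS : IsCellUnion S) (hT : IsCellUnion T) :
    IsCellUnion (S ∪ T) := by
  obtain ⟨𝒞, h𝒞, hc, rfl⟩ := hS
  obtain ⟨𝒟, h𝒟, hd, rfl⟩ := hT
  exact ⟨𝒞 ∪ 𝒟, h𝒞.union h𝒟, fun c hc' => hc'.elim (hc c) (hd c), (sUnion_union 𝒞 𝒟).symm⟩

theorem IsCellUnion.inter {S T : Set (σ → K)} (hS : IsCellUnion S) (hT : IsCellUnion T) :
    IsCellUnion (S ∩ T) := by
  obtain ⟨𝒞, h𝒞, hc, rfl⟩ := hS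
  obtain ⟨𝒟, h𝒟, hd, rfl⟩ := hT
  refine ⟨image2 (· ∩ ·) 𝒞 𝒟, h𝒞.image2 _ h𝒟, forall_mem_image2.2 fun c hc' d hd' =>
    (hc c hc').inter (hd d hd'), ?_⟩
  ext a
  simp only [mem_inter_iff, mem_sUnion, mem_image2]
  grind

theorem IsCellUnion.interior_nonempty {S : Set (σ → K)} (hS : IsCellUnion S)
    (h : vanishingIdeal K S = ⊥) : (interior S).Nonempty := by
  obtain ⟨𝒞, h𝒞, hcell, rfl⟩ := hS
  obtain ⟨c, hc𝒞, hc⟩ := h𝒞.exists_vanishingIdeal_eq_bot h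
  obtain ⟨Z, g, U, -, hU, -, -, rfl⟩ := hcell c hc𝒞
  have hZ : ∀ f ∈ Z, f = 0 := fun f hf =>
    (Submodule.eq_bot_iff _).1 hc f fun a ha => ha.1 f hf
  have hne : U.Nonempty := by
    by_contra! hU
    simp [hU, vanishingIdeal_empty] at hc
  refine hne.mono (interior_maximal (fun a ha => ⟨_, hc𝒞, fun f hf => ?_, ha⟩) hU)
  simp [hZ f hf]

variable [IsTopologicalRing K] [T1Space K]

theorem IsCell.compl {S : Set (σ → K)} (hS : IsCell S) : IsCellUnion Sᶜ := by
  obtain ⟨Z, g, U, hZ, hU, hUg, hgU, rfl⟩ := hS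
  have hopen (f : MvPolynomial σ K) : IsOpen {a : σ → K | eval a f ≠ 0} :=
    isOpen_ne_fun (continuous_eval f) continuous_const
  refine ⟨insert {a | ∀ f ∈ ({g} : Set _), eval a f = 0} <|
      insert ({a | eval a g ≠ 0} \ U) ((fun f => {a | eval a f ≠ 0}) '' Z),
    ((hZ.image _).insert _).insert _, ?_, ?_⟩
  · simp only [mem_insert_iff, forall_eq_or_imp, forall_mem_image]
    refine ⟨isCell_zeroSet (finite_singleton g), ?_, fun f _ =>
      isCell_of_isOpen f (hopen f) subset_rfl inter_subset_right⟩
    have hclosure : {a | eval a g ≠ 0} \ U = {a | eval a g ≠ 0} \ closure U :=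
      Subset.antisymm (fun a ha => ⟨ha.1, fun hcl => ha.2 (hgU ⟨hcl, ha.1⟩)⟩)
        (sdiff_subset_sdiff_right subset_closure)
    refine isCell_of_isOpen g ?_ sdiff_subset fun a ha => ⟨ha.2, fun haU => ?_⟩
    · exact hclosure ▸ (hopen g).sdiff isClosed_closure
    · exact Set.disjoint_left.1 (disjoint_sdiff_left.closure_left hU) ha.1 haU
  · ext a
    simp only [mem_compl_iff, mem_inter_iff, mem_ofPred_eq, sUnion_insert, mem_union,
      mem_singleton_iff, forall_eq, Set.mem_sdiff, sUnion_image, mem_iUnion, exists_prop]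
    have := @hUg a
    grind

theorem IsCellUnion.compl {S : Set (σ → K)} (hS : IsCellUnion S) : IsCellUnion Sᶜ := by
  obtain ⟨𝒞, h𝒞, hc, rfl⟩ := hS
  induction 𝒞, h𝒞 using Set.Finite.induction_on with
  | empty => simpa using (isCell_zeroSet (σ := σ) (K := K) finite_empty).isCellUnion
  | @insert c 𝒞 _ _ ih =>
    rw [sUnion_insert, compl_union]
    exact (hc c (mem_insert c 𝒞)).compl.inter (ih fun d hd => hc d (mem_insert_of_mem c hd))

theorem IsCell.exists_guard {S : Set (σ → K)} (hS : IsCell S) :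
    ∃ g : MvPolynomial σ K, (∀ a ∈ S, eval a g ≠ 0) ∧ ∀ a ∈ closure S \ S, eval a g = 0 := by
  obtain ⟨Z, g, U, -, -, hUg, hgU, rfl⟩ := hS
  refine ⟨g, fun a ha => hUg ha.2, fun a ⟨hcl, hnot⟩ => ?_⟩
  by_contra hg
  have hZ : IsClosed {a : σ → K | ∀ f ∈ Z, eval a f = 0} := by
    simpa only [ofPred_forall] using isClosed_biInter fun f _ => isClosed_setOf_eval_eq_zero f
  exact hnot ⟨closure_minimal inter_subset_left hZ hcl,
    hgU ⟨closure_mono inter_subset_right hcl, hg⟩⟩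

end Cells

section Frontier

variable {K : Type*} [Field K] [TopologicalSpace K] [IsTopologicalRing K] [T1Space K] {n k : ℕ}

theorem IsCell.exists_strictMono_vanishingIdeal_eq_bot {c : Set (Fin n → K)} (hc : IsCell c)
    {j : Fin k → Fin n} (h : vanishingIdeal K ((· ∘ j) '' (closure c \ c)) = ⊥) :
    ∃ j' : Fin (k + 1) → Fin n, StrictMono j' ∧ vanishingIdeal K ((· ∘ j') '' c) = ⊥ := by
  obtain ⟨g, hgc, hg⟩ := hc.exists_guard
  rw [← algebraicIndependent_coordinate_comp_iff] at h
  obtain ⟨i, hi, hind⟩ := exists_algebraicIndepOn_insert_coordinate hgc hg h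
  have hcard : (insert i (Finset.univ.image j)).card = k + 1 := by
    rw [Finset.card_insert_of_notMem (by simpa using hi),
      Finset.card_image_of_injective _ h.injective.of_comp, Finset.card_univ, Fintype.card_fin]
  obtain ⟨j', hj', hind'⟩ := AlgebraicIndepOn.exists_strictMono hcard (by simpa using hind)
  exact ⟨j', hj', (algebraicIndependent_coordinate_comp_iff c j').1 hind'⟩

theorem IsCellUnion.exists_strictMono_vanishingIdeal_eq_bot {S : Set (Fin n → K)}
    (hS : IsCellUnion S) {j : Fin k → Fin n}
    (h : vanishingIdeal K ((· ∘ j) '' (closure S \ S)) = ⊥) :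
    ∃ j' : Fin (k + 1) → Fin n, StrictMono j' ∧ vanishingIdeal K ((· ∘ j') '' S) = ⊥ := by
  obtain ⟨𝒞, h𝒞, hcell, rfl⟩ := hS
  have hsub : closure (⋃₀ 𝒞) \ ⋃₀ 𝒞 ⊆ ⋃₀ ((fun c => closure c \ c) '' 𝒞) := by
    rw [h𝒞.closure_sUnion]
    rintro a ⟨ha, hnot⟩
    simp only [mem_iUnion, sUnion_image] at ha ⊢
    obtain ⟨c, hc, hac⟩ := ha
    exact ⟨c, hc, hac, fun h => hnot ⟨c, hc, h⟩⟩
  have hbot := vanishingIdeal_eq_bot_of_subset (image_mono hsub) h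
  rw [image_sUnion] at hbot
  obtain ⟨_, ⟨_, ⟨c, hc𝒞, rfl⟩, rfl⟩, hc⟩ :=
    ((h𝒞.image _).image _).exists_vanishingIdeal_eq_bot hbot
  obtain ⟨j', hj', hj'c⟩ := (hcell c hc𝒞).exists_strictMono_vanishingIdeal_eq_bot hc
  exact ⟨j', hj', vanishingIdeal_eq_bot_of_subset (image_mono (subset_sUnion_of_mem hc𝒞)) hj'c⟩

end Frontier

section ProjDim

variable {K : Type*} [TopologicalSpace K] {n k : ℕ}

theorem bddAbove_projDim (S : Set (Fin n → K)) : BddAbove {k : ℕ | ∃ j : Fin k → Fin n,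
    StrictMono j ∧ (interior ((fun x : Fin n → K => x ∘ j) '' S)).Nonempty} :=
  ⟨n, fun _ ⟨j, hj, _⟩ => by simpa using Fintype.card_le_of_injective j hj.injective⟩

theorem le_projDim {S : Set (Fin n → K)} {j : Fin k → Fin n} (hj : StrictMono j)
    (h : (interior ((· ∘ j) '' S)).Nonempty) : k ≤ projDim S :=
  le_csSup (bddAbove_projDim S) ⟨j, hj, h⟩

theorem exists_strictMono_projDim {S : Set (Fin n → K)} (hS : S.Nonempty) :
    ∃ j : Fin (projDim S) → Fin n, StrictMono j ∧ (interior ((· ∘ j) '' S)).Nonempty := by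
  obtain ⟨a, ha⟩ := hS
  have h0 : (interior ((· ∘ finZeroElim) '' S : Set (Fin 0 → K))).Nonempty :=
    ⟨default, mem_interior_iff_mem_nhds.2 (Filter.mem_of_superset Filter.univ_mem
      fun b _ => ⟨a, ha, Subsingleton.elim _ _⟩)⟩
  exact Nat.sSup_mem (s := {k : ℕ | ∃ j : Fin k → Fin n, StrictMono j ∧
    (interior ((fun x : Fin n → K => x ∘ j) '' S)).Nonempty})
    ⟨0, finZeroElim, fun a => a.elim0, h0⟩ (bddAbove_projDim S)

end ProjDim

section Relations

theorem Function.extend_comp_eq_self {α β γ : Type*} [Zero γ] {e : α → β} (he : Injective e)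
    {w : β → γ} (hw : ∀ b ∉ range e, w b = 0) : extend e (w ∘ e) 0 = w := by
  funext b
  by_cases hb : b ∈ range e
  · obtain ⟨a, rfl⟩ := hb
    exact he.extend_apply _ _ a
  · rw [extend_apply' _ _ _ fun h => hb h, hw b hb, Pi.zero_apply]

def RelationSetsOpen (Lrel : Language) (K : Type*) [Zero K] [TopologicalSpace K]
    [Lrel.Structure K] : Prop :=
  ∀ (m k : ℕ) (R : Lrel.Relations m) (j : Fin k → Fin m), StrictMono j →
    IsOpen {b : Fin k → K | (∀ l, b l ≠ 0) ∧ RelMap R (extend j b 0)} ∧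
    IsOpen {b : Fin k → K | (∀ l, b l ≠ 0) ∧ ¬ RelMap R (extend j b 0)}

variable {Lrel : Language} {K : Type*} [Lrel.Structure K]


theorem setOf_relMap_eq_iUnion [Zero K] {X : Type*} {l : ℕ} (R : Lrel.Relations l)
    (w : X → Fin l → K) :
    {x | RelMap R (w x)} = ⋃ I : Finset (Fin l), {x | ∀ i ∉ I, w x i = 0} ∩
      (fun x => w x ∘ I.orderEmbOfFin rfl) ⁻¹'
        {b | (∀ i, b i ≠ 0) ∧ RelMap R (extend (I.orderEmbOfFin rfl) b 0)} := by
  classical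
  have hext {x : X} {I : Finset (Fin l)} (h : ∀ i ∉ I, w x i = 0) :
      extend (I.orderEmbOfFin rfl) (w x ∘ I.orderEmbOfFin rfl) 0 = w x :=
    extend_comp_eq_self (I.orderEmbOfFin rfl).injective fun i hi => h i (by simpa using hi)
  ext x
  simp only [mem_ofPred_eq, mem_iUnion, mem_inter_iff, mem_preimage, comp_apply]
  constructor
  · intro hR
    let I := Finset.univ.filter fun i => w x i ≠ 0
    have hI : ∀ i ∉ I, w x i = 0 := fun i hi => by simpa [I] using hi
    exact ⟨I, hI, fun i => (Finset.mem_filter.1 (I.orderEmbOfFin_mem rfl i)).2,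
      by rwa [hext hI]⟩
  · rintro ⟨I, hI, -, hR⟩
    rwa [hext hI] at hR

theorem isCellUnion_setOf_relMap [Field K] [TopologicalSpace K] [IsTopologicalRing K] {σ : Type*}
    (hrel : RelationSetsOpen Lrel K) {l : ℕ} (R : Lrel.Relations l)
    (f : Fin l → MvPolynomial σ K) :
    IsCellUnion {a : σ → K | RelMap R fun i => eval a (f i)} := by
  rw [setOf_relMap_eq_iUnion]
  refine isCellUnion_iUnion fun I => IsCell.inter ?_ ?_
  · convert isCell_zeroSet ((toFinite ((I : Set (Fin l))ᶜ)).image f) using 1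
    ext a
    simp
  set e := I.orderEmbOfFin rfl
  let U (p : Prop → Prop) : Set (σ → K) := (fun a i => eval a (f (e i))) ⁻¹'
    {b | (∀ i, b i ≠ 0) ∧ p (RelMap R (extend e b 0))}
  have he : Continuous fun a i => eval a (f (e i)) :=
    continuous_pi fun i => continuous_eval (f (e i))
  have hguard (a : σ → K) : eval a (∏ i ∈ I, f i) ≠ 0 ↔ ∀ i, eval a (f (e i)) ≠ 0 := by
    rw [map_prod, Finset.prod_ne_zero_iff]
    refine ⟨fun h i => h _ (I.orderEmbOfFin_mem rfl i), fun h i hi => ?_⟩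
    obtain ⟨i, rfl⟩ : i ∈ range e := by rwa [Finset.range_orderEmbOfFin]
    exact h i
  refine isCell_of_isOpen (∏ i ∈ I, f i) ((hrel _ _ R _ e.strictMono).1.preimage he)
    (fun a ha => (hguard a).2 ha.1) ?_
  rintro a ⟨hcl, hg⟩
  by_contra haU
  have hdisj : Disjoint (U id) (U Not) := Set.disjoint_left.2 fun _ h h' => h'.2 h.2
  exact Set.disjoint_left.1 (hdisj.closure_left ((hrel _ _ R _ e.strictMono).2.preimage he))
    hcl ⟨(hguard a).1 hg, fun hR => haU ⟨(hguard a).1 hg, hR⟩⟩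

end Relations

section Definable

variable {Lrel : Language} {K : Type*} [Field K] [Ring.CompatibleRing K] [Lrel.Structure K]

theorem FirstOrder.Language.Term.exists_eval_eq_realize [Lrel.IsRelational] {α σ : Type*}
    (v : α → MvPolynomial σ K) (t : (Language.ring.sum Lrel).Term α) :
    ∃ f : MvPolynomial σ K, ∀ a : σ → K, t.realize (fun i => eval a (v i)) = eval a f := by
  induction t with
  | var i => exact ⟨v i, fun a => rfl⟩
  | func F ts ih =>
    choose f hf using ih
    rcases F with F | F
    · cases F with
      | add => exact ⟨f 0 + f 1, fun a => by
          simp only [Term.realize, hf, map_add]; exact Ring.CompatibleRing.funMap_add (R := K) _⟩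
      | mul => exact ⟨f 0 * f 1, fun a => by
          simp only [Term.realize, hf, map_mul]; exact Ring.CompatibleRing.funMap_mul (R := K) _⟩
      | neg => exact ⟨-f 0, fun a => by
          simp only [Term.realize, hf, map_neg]; exact Ring.CompatibleRing.funMap_neg (R := K) _⟩
      | zero => exact ⟨0, fun a => by
          simp only [Term.realize, hf, map_zero]; exact Ring.CompatibleRing.funMap_zero (R := K) _⟩
      | one => exact ⟨1, fun a => by
          simp only [Term.realize, hf, map_one]; exact Ring.CompatibleRing.funMap_one (R := K) _⟩
    · exact isEmptyElim F

theorem definable_univ_iff {n : ℕ} {S : Set (Fin n → K)} :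
    (univ : Set K).Definable (Language.ring.sum Lrel) S ↔
      ∃ φ : (Language.ring.sum Lrel).Formula (Fin n ⊕ K),
        S = {a | φ.Realize (Sum.elim a id)} := by
  rw [definable_iff_exists_formula_sum]
  constructor
  · rintro ⟨φ, rfl⟩
    refine ⟨φ.relabel (Sum.elim (fun c => Sum.inr c.1) Sum.inl), ?_⟩
    ext a
    simp only [mem_ofPred_eq, Formula.realize_relabel]
    congr! 1
    ext (_ | _) <;> rfl
  · rintro ⟨φ, rfl⟩
    refine ⟨φ.relabel (Sum.elim Sum.inr (fun c => Sum.inl ⟨c, trivial⟩)), ?_⟩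
    ext a
    simp only [mem_ofPred_eq, Formula.realize_relabel]
    congr! 1
    ext (_ | _) <;> rfl

variable [TopologicalSpace K] [IsTopologicalRing K] [T1Space K]

theorem FirstOrder.Language.BoundedFormula.IsQF.isCellUnion [Lrel.IsRelational]
    (hrel : RelationSetsOpen Lrel K) {n : ℕ}
    {φ : (Language.ring.sum Lrel).BoundedFormula (Fin n ⊕ K) 0} (hφ : φ.IsQF) :
    IsCellUnion {a : Fin n → K | φ.Realize (Sum.elim a id) default} := by
  have hterm (t : (Language.ring.sum Lrel).Term ((Fin n ⊕ K) ⊕ Fin 0)) :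
      ∃ f : MvPolynomial (Fin n) K,
        ∀ a xs, t.realize (Sum.elim (Sum.elim a id) xs) = eval a f := by
    obtain ⟨f, hf⟩ := Term.exists_eval_eq_realize (Sum.elim (Sum.elim X C) finZeroElim) t
    refine ⟨f, fun a xs => Eq.trans ?_ (hf a)⟩
    congr 1
    ext ((i | c) | i)
    · simp
    · simp
    · exact i.elim0
  induction hφ with
  | falsum =>
    convert isCellUnion_empty using 1
    exact eq_empty_of_forall_notMem fun a h => h
  | of_isAtomic h =>
    cases h with
    | equal t₁ t₂ =>
      obtain ⟨f₁, hf₁⟩ := hterm t₁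
      obtain ⟨f₂, hf₂⟩ := hterm t₂
      convert (isCell_zeroSet (finite_singleton (f₁ - f₂))).isCellUnion using 1
      ext a
      simp [hf₁, hf₂, sub_eq_zero]
    | rel R ts =>
      rcases R with R | R
      · exact isEmptyElim R
      · choose f hf using fun i => hterm (ts i)
        convert isCellUnion_setOf_relMap hrel R f using 1
        ext a
        change RelMap (L := Language.ring.sum Lrel) (Sum.inr R)
          (fun i => (ts i).realize (Sum.elim (Sum.elim a id) default)) ↔ _
        simp only [hf]
        rfl
  | imp _ _ ih₁ ih₂ =>
    convert ih₁.compl.union ih₂ using 1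
    ext a
    simp only [mem_ofPred_eq, BoundedFormula.realize_imp, mem_union, mem_compl_iff]
    tauto

theorem Set.Definable.isCellUnion [Lrel.IsRelational]
    (hQE : ∀ (m : ℕ) (φ : (Language.ring.sum Lrel).Formula (Fin m ⊕ K)),
      ∃ ψ : (Language.ring.sum Lrel).Formula (Fin m ⊕ K), ψ.IsQF ∧
        ∀ a : Fin m → K, φ.Realize (Sum.elim a id) ↔ ψ.Realize (Sum.elim a id))
    (hrel : RelationSetsOpen Lrel K) {n : ℕ} {S : Set (Fin n → K)}
    (hS : (univ : Set K).Definable (Language.ring.sum Lrel) S) : IsCellUnion S := by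
  obtain ⟨φ, rfl⟩ := definable_univ_iff.1 hS
  obtain ⟨ψ, hψ, hφψ⟩ := hQE n φ
  convert hψ.isCellUnion hrel using 1
  ext a
  exact hφψ a

end Definable

theorem piecewise_continuity_statement_7_general
    {Lrel : FirstOrder.Language} [Lrel.IsRelational]
    {K Γ₀ : Type*} [Field K] [LinearOrderedCommGroupWithZero Γ₀] [Valued K Γ₀]
    [FirstOrder.Ring.CompatibleRing K] [Lrel.Structure K]
    -- quantifier elimination with parameters from `K`
    (hQE : ∀ (m : ℕ) (φ : (FirstOrder.Language.ring.sum Lrel).Formula (Fin m ⊕ K)),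
      ∃ ψ : (FirstOrder.Language.ring.sum Lrel).Formula (Fin m ⊕ K),
        FirstOrder.Language.BoundedFormula.IsQF ψ ∧
        ∀ a : Fin m → K, φ.Realize (Sum.elim a id) ↔ ψ.Realize (Sum.elim a id))
    -- the product topologies of the valuation topology form a topological system
    (hrel : ∀ (m k : ℕ) (R : Lrel.Relations m) (j : Fin k → Fin m), StrictMono j →
      IsOpen {b : Fin k → K | (∀ l, b l ≠ 0) ∧
        FirstOrder.Language.Structure.RelMap R (Function.extend j b 0)} ∧
      IsOpen {b : Fin k → K | (∀ l, b l ≠ 0) ∧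
        ¬ FirstOrder.Language.Structure.RelMap R (Function.extend j b 0)})
    -- an `L`-definable set with parameters, with nonempty frontier
    {n : ℕ} (E : Set (Fin n → K))
    (hE : ∃ φ : (FirstOrder.Language.ring.sum Lrel).Formula (Fin n ⊕ K),
      E = {a : Fin n → K | φ.Realize (Sum.elim a id)})
    (hfr : (closure E \ E).Nonempty) :
    projDim (closure E \ E) < projDim E := by
  have hdef := definable_univ_iff.2 hE
  have : ∀ x : K, (𝓝[≠] x).NeBot := neBot_nhdsNE_of_not_discreteTopology fun _ => by
    obtain ⟨a, hcl, ha⟩ := hfr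
    exact ha ((isClosed_discrete E).closure_subset hcl)
  obtain ⟨j, -, hj⟩ := exists_strictMono_projDim hfr
  obtain ⟨j', hj', hbot⟩ := (hdef.isCellUnion hQE hrel).exists_strictMono_vanishingIdeal_eq_bot
    (vanishingIdeal_eq_bot_of_interior_nonempty hj)
  exact le_projDim hj' ((hdef.image_comp j').isCellUnion hQE hrel |>.interior_nonempty hbot)

/-- Let `L` be a language extending the language of rings whose only
function symbols are the ring ones (formalized as `L = ring ⊕ Lrel` with `Lrel`
relational), and let `K` be a field with a non-trivial valuation which is an
`L`-structure admitting quantifier elimination, such that the product topologies of the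
valuation topology form a topological system, and such that every nonempty special open
subset of `K` is infinite.  Then for every `L`-definable subset `E` of `K^n` with
nonempty frontier `∂E = closure E \ E`, one has `dim (∂E) < dim E`. -/
theorem piecewise_continuity_statement_7
    {Lrel : FirstOrder.Language} [Lrel.IsRelational]
    {K Γ₀ : Type*} [Field K] [LinearOrderedCommGroupWithZero Γ₀] [Valued K Γ₀]
    [FirstOrder.Ring.CompatibleRing K] [Lrel.Structure K]
    -- the valuation is non-trivial
    (hval : ∃ x : K, x ≠ 0 ∧ Valued.v x ≠ (1 : Γ₀))
    -- quantifier elimination with parameters from `K`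
    (hQE : ∀ (m : ℕ) (φ : (FirstOrder.Language.ring.sum Lrel).Formula (Fin m ⊕ K)),
      ∃ ψ : (FirstOrder.Language.ring.sum Lrel).Formula (Fin m ⊕ K),
        FirstOrder.Language.BoundedFormula.IsQF ψ ∧
        ∀ a : Fin m → K, φ.Realize (Sum.elim a id) ↔ ψ.Realize (Sum.elim a id))
    -- the product topologies of the valuation topology form a topological system
    (hterm : ∀ (m s : ℕ) (t : Fin s → (FirstOrder.Language.ring.sum Lrel).Term (Fin m ⊕ K)),
      Continuous fun (a : Fin m → K) (l : Fin s) => (t l).realize (Sum.elim a id))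
    (hsingleton : ∀ a : K, IsClosed {x : Fin 1 → K | x 0 = a})
    (hrel : ∀ (m k : ℕ) (R : Lrel.Relations m) (j : Fin k → Fin m), StrictMono j →
      IsOpen {b : Fin k → K | (∀ l, b l ≠ 0) ∧
        FirstOrder.Language.Structure.RelMap R (Function.extend j b 0)} ∧
      IsOpen {b : Fin k → K | (∀ l, b l ≠ 0) ∧
        ¬ FirstOrder.Language.Structure.RelMap R (Function.extend j b 0)})
    -- every nonempty special open subset of `K` is infinite
    (hspecial : ∀ S : Set (Fin 1 → K), IsSpecialOpen Lrel K S → S.Nonempty → S.Infinite)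
    -- an `L`-definable set with parameters, with nonempty frontier
    {n : ℕ} (E : Set (Fin n → K))
    (hE : ∃ φ : (FirstOrder.Language.ring.sum Lrel).Formula (Fin n ⊕ K),
      E = {a : Fin n → K | φ.Realize (Sum.elim a id)})
    (hfr : (closure E \ E).Nonempty) :
    projDim (closure E \ E) < projDim E :=
  piecewise_continuity_statement_7_general (Γ₀ := Γ₀) hQE hrel E hE hfr
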